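/- arXiv:2104.06341 — 3 statements merged into one kernel-verified Lean document; each statement's English description precedes it below -/
import Mathlib

section
/- Let X ⊆ ℝⁿ be nonempty and compact, f, g : ℝⁿ → ℝ continuous, M > 0, and define p(y) = min over x ∈ X, ρ ≥ 0 with g(x) ≤ y + ρ of f(x) + M·ρ. Let y_min = min_{x ∈ X} g(x). Then for all y ≤ y_min, p(y) = p(y_min) + M·(y_min − y); i.e., p is affine with slope −M on (−∞, y_min]. -/
open Set

theorem stmt1 {n : ℕ} (X : Set (EuclideanSpace ℝ (Fin n)))
    (hXne : X.Nonempty) (hXc : IsCompact X)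
    (f g : EuclideanSpace ℝ (Fin n) → ℝ)
    (hf : Continuous f) (hg : Continuous g)
    (M : ℝ) (hM : 0 < M)
    (p : ℝ → ℝ)
    (hp : ∀ y, p y =
      sInf {v : ℝ | ∃ x ∈ X, ∃ ρ : ℝ, 0 ≤ ρ ∧ g x ≤ y + ρ ∧ v = f x + M * ρ})
    (ymin : ℝ) (hymin : IsLeast (g '' X) ymin) :
    ∀ y, y ≤ ymin → p y = p ymin + M * (ymin - y) := by
  intro y hy
  obtain ⟨x₀, hx₀, hgx₀⟩ := hymin.1
  obtain ⟨z, hz, hzmin⟩ := hXc.exists_isMinOn hXne hf.continuousOn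
  set c : ℝ := M * (ymin - y) with hc
  have hc0 : 0 ≤ c := mul_nonneg hM.le (by linarith)
  set S : ℝ → Set ℝ := fun t =>
    {v : ℝ | ∃ x ∈ X, ∃ ρ : ℝ, 0 ≤ ρ ∧ g x ≤ t + ρ ∧ v = f x + M * ρ} with hS
  have hSne : (S ymin).Nonempty := ⟨f x₀ + M * 0, x₀, hx₀, 0, le_rfl, by
    simp [hgx₀], rfl⟩
  have hSbdd : BddBelow (S ymin) := by
    refine ⟨f z, ?_⟩
    rintro v ⟨x, hx, ρ, hρ, _, rfl⟩
    have := hzmin hx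
    have : f z ≤ f x := this
    nlinarith
  have hset : S y = (fun v => v + c) '' S ymin := by
    ext v
    constructor
    · rintro ⟨x, hx, ρ, hρ, hgle, rfl⟩
      have hgx : ymin ≤ g x := hymin.2 ⟨x, hx, rfl⟩
      refine ⟨f x + M * (ρ - (ymin - y)), ⟨x, hx, ρ - (ymin - y), by linarith, by linarith, rfl⟩, ?_⟩
      simp [hc]; ring
    · rintro ⟨w, ⟨x, hx, ρ, hρ, hgle, rfl⟩, rfl⟩
      exact ⟨x, hx, ρ + (ymin - y), by linarith, by linarith, by simp [hc]; ring⟩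
  have key := (OrderIso.addRight c).map_csInf' hSne hSbdd
  simp only [OrderIso.addRight_apply] at key
  rw [hp, hp]
  show sInf (S y) = sInf (S ymin) + c
  rw [hset, ← key]
end

section
/- Let X ⊆ ℝⁿ be nonempty and compact, f, g : ℝⁿ → ℝ continuous with f convex and g convex, X convex, and M > 0. Then the primal function p(y) = inf { f(x) + M·ρ : x ∈ X, ρ ≥ 0, g(x) ≤ y + ρ } is nonincreasing in y, and every subderivative s of p at any point y satisfies −M ≤ s ≤ 0. -/
open Set

theorem stmt3 {n : ℕ} (X : Set (EuclideanSpace ℝ (Fin n)))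
    (hXne : X.Nonempty) (hXc : IsCompact X) (hXcv : Convex ℝ X)
    (f g : EuclideanSpace ℝ (Fin n) → ℝ)
    (hf : Continuous f) (hg : Continuous g)
    (hfc : ConvexOn ℝ univ f) (hgc : ConvexOn ℝ univ g)
    (M : ℝ) (hM : 0 < M)
    (p : ℝ → ℝ)
    (hp : ∀ y, p y =
      sInf {v : ℝ | ∃ x ∈ X, ∃ ρ : ℝ, 0 ≤ ρ ∧ g x ≤ y + ρ ∧ v = f x + M * ρ}) :
    Antitone p ∧
      ∀ y s : ℝ, (∀ z : ℝ, p y + s * (z - y) ≤ p z) → -M ≤ s ∧ s ≤ 0 := by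
  obtain ⟨x₀, hx₀, hmin⟩ := hXc.exists_isMinOn hXne hf.continuousOn
  set S : ℝ → Set ℝ := fun y =>
    {v : ℝ | ∃ x ∈ X, ∃ ρ : ℝ, 0 ≤ ρ ∧ g x ≤ y + ρ ∧ v = f x + M * ρ} with hS
  have hSne : ∀ y, (S y).Nonempty := by
    intro y
    refine ⟨f x₀ + M * max 0 (g x₀ - y), x₀, hx₀, max 0 (g x₀ - y),
      le_max_left _ _, ?_, rfl⟩
    have := le_max_right 0 (g x₀ - y)
    linarith
  have hSbdd : ∀ y, BddBelow (S y) := by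
    intro y
    refine ⟨f x₀, ?_⟩
    rintro v ⟨x, hx, ρ, hρ, -, rfl⟩
    have h1 : f x₀ ≤ f x := hmin hx
    nlinarith [hM.le]
  have hmono : Antitone p := by
    intro y z hyz
    rw [hp y, hp z]
    apply csInf_le_csInf (hSbdd z) (hSne y)
    rintro v ⟨x, hx, ρ, hρ, hg', rfl⟩
    exact ⟨x, hx, ρ, hρ, by linarith, rfl⟩
  have hkey : ∀ y t : ℝ, 0 ≤ t → p (y - t) ≤ p y + M * t := by
    intro y t ht
    rw [hp y, hp (y - t)]
    have h : sInf (S (y - t)) - M * t ≤ sInf (S y) := by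
      apply le_csInf (hSne y)
      rintro v ⟨x, hx, ρ, hρ, hg', rfl⟩
      have hmem : f x + M * (ρ + t) ∈ S (y - t) :=
        ⟨x, hx, ρ + t, by linarith, by linarith, rfl⟩
      have := csInf_le (hSbdd (y - t)) hmem
      nlinarith
    linarith
  refine ⟨hmono, ?_⟩
  intro y s hs
  constructor
  · have h1 := hs (y - 1)
    have h2 := hkey y 1 zero_le_one
    nlinarith
  · have h1 := hs (y + 1)
    have h2 := hmono (show y ≤ y + 1 by linarith)
    nlinarith
end

section
/- Let X ⊆ ℝⁿ be nonempty compact convex, f, g convex and continuous, M > 0, and suppose Slater's condition holds: there is x̄ ∈ X with g(x̄) < y. Then strong duality holds for the subproblem min { f(x) + M·ρ : x ∈ X, ρ ≥ 0, g(x) ≤ y + ρ }: its optimal value p(y) equals max_{0 ≤ μ ≤ M} q(μ), where q(μ) = min_{x ∈ X} [f(x) + μ·(g(x) − y)], and if μ* attains this maximum then −μ* is a subderivative of p at y. -/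
open Set

theorem stmt19 {n : ℕ} (X : Set (EuclideanSpace ℝ (Fin n)))
    (hXne : X.Nonempty) (hXc : IsCompact X) (hXcv : Convex ℝ X)
    (f g : EuclideanSpace ℝ (Fin n) → ℝ)
    (hfc : ConvexOn ℝ univ f) (hgc : ConvexOn ℝ univ g)
    (hf : Continuous f) (hg : Continuous g)
    (M : ℝ) (hM : 0 < M) (y : ℝ)
    (hslater : ∃ xbar ∈ X, g xbar < y)
    (p : ℝ → ℝ)
    (hp : ∀ w, p w =
      sInf {v : ℝ | ∃ x ∈ X, ∃ ρ : ℝ, 0 ≤ ρ ∧ g x ≤ w + ρ ∧ v = f x + M * ρ})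
    (q : ℝ → ℝ)
    (hq : ∀ μ, q μ = sInf ((fun x => f x + μ * (g x - y)) '' X)) :
    p y = sSup (q '' Icc 0 M) ∧
      ∀ μstar ∈ Icc (0:ℝ) M, IsMaxOn q (Icc 0 M) μstar →
        ∀ z : ℝ, p y - μstar * (z - y) ≤ p z := by
  classical
  set S : ℝ → Set ℝ :=
    fun w => {v : ℝ | ∃ x ∈ X, ∃ ρ : ℝ, 0 ≤ ρ ∧ g x ≤ w + ρ ∧ v = f x + M * ρ} with hSdef
  obtain ⟨x0, hx0⟩ := hXne
  obtain ⟨b, hb⟩ : ∃ b : ℝ, ∀ x ∈ X, b ≤ f x := by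
    obtain ⟨b, hb⟩ := hXc.bddBelow_image hf.continuousOn
    exact ⟨b, fun x hx => hb (mem_image_of_mem f hx)⟩
  have hSne : ∀ w, (S w).Nonempty := by
    intro w
    refine ⟨f x0 + M * max 0 (g x0 - w), x0, hx0, max 0 (g x0 - w), le_max_left _ _, ?_, rfl⟩
    have := le_max_right 0 (g x0 - w); linarith
  have hSbdd : ∀ w, BddBelow (S w) := by
    intro w
    refine ⟨b, ?_⟩
    rintro v ⟨x, hx, ρ, hρ, hgx, rfl⟩
    nlinarith [hb x hx, hM.le]
  -- feasibility of each x with w = g x, ρ = 0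
  have hfeas : ∀ x ∈ X, p (g x) ≤ f x := by
    intro x hx
    rw [hp]
    have : f x ∈ S (g x) := ⟨x, hx, 0, le_refl 0, by linarith, by ring⟩
    exact csInf_le (hSbdd _) this
  -- inclusion monotonicity : p is antitone
  have hanti : ∀ a c : ℝ, a ≤ c → p c ≤ p a := by
    intro a c hac
    rw [hp, hp]
    refine csInf_le_csInf (hSbdd _) (hSne a) ?_
    rintro v ⟨x, hx, ρ, hρ, hgx, rfl⟩
    exact ⟨x, hx, ρ, hρ, by linarith, rfl⟩
  -- control of decrease: p a ≤ p c + M * (c - a) for a ≤ c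
  have hlip : ∀ a c : ℝ, a ≤ c → p a ≤ p c + M * (c - a) := by
    intro a c hac
    rw [hp a, hp c, ← sub_le_iff_le_add]
    refine le_csInf (hSne c) ?_
    rintro v ⟨x, hx, ρ, hρ, hgx, rfl⟩
    rw [sub_le_iff_le_add]
    have : f x + M * (ρ + (c - a)) ∈ S a := by
      exact ⟨x, hx, ρ + (c - a), by linarith, by linarith, rfl⟩
    have h1 := csInf_le (hSbdd a) this
    nlinarith
  -- convexity of p
  have hconv : ConvexOn ℝ (univ : Set ℝ) p := by
    refine ⟨convex_univ, ?_⟩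
    intro a _ c _ ta tc hta htc htsum
    refine le_of_forall_pos_le_add ?_
    intro ε hε
    obtain ⟨v1, hv1, hv1lt⟩ :=
      exists_lt_of_csInf_lt (hSne a) (lt_add_of_pos_right (sInf (S a)) (half_pos hε))
    obtain ⟨v2, hv2, hv2lt⟩ :=
      exists_lt_of_csInf_lt (hSne c) (lt_add_of_pos_right (sInf (S c)) (half_pos hε))
    obtain ⟨x1, hx1, ρ1, hρ1, hg1, rfl⟩ := hv1
    obtain ⟨x2, hx2, ρ2, hρ2, hg2, rfl⟩ := hv2
    have hxX : ta • x1 + tc • x2 ∈ X := hXcv hx1 hx2 hta htc htsum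
    have hfle := hfc.2 (mem_univ x1) (mem_univ x2) hta htc htsum
    have hgle := hgc.2 (mem_univ x1) (mem_univ x2) hta htc htsum
    have hmem : f (ta • x1 + tc • x2) + M * (ta * ρ1 + tc * ρ2) ∈ S (ta • a + tc • c) := by
      refine ⟨ta • x1 + tc • x2, hxX, ta * ρ1 + tc * ρ2, by positivity, ?_, rfl⟩
      have h1 : ta * g x1 ≤ ta * (a + ρ1) := mul_le_mul_of_nonneg_left hg1 hta
      have h2 : tc * g x2 ≤ tc * (c + ρ2) := mul_le_mul_of_nonneg_left hg2 htc
      simp only [smul_eq_mul] at hgle ⊢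
      nlinarith
    have hle := csInf_le (hSbdd _) hmem
    rw [hp (ta • a + tc • c)] at *
    simp only [smul_eq_mul, hp a, hp c] at *
    have h3 : ta * (f x1 + M * ρ1) ≤ ta * (sInf (S a) + ε / 2) :=
      mul_le_mul_of_nonneg_left hv1lt.le hta
    have h4 : tc * (f x2 + M * ρ2) ≤ tc * (sInf (S c) + ε / 2) :=
      mul_le_mul_of_nonneg_left hv2lt.le htc
    nlinarith [hfle, hle]
  -- the subgradient slope
  set T : Set ℝ := (fun z => (p z - p y) / (z - y)) '' Ioi y with hTdef
  have hTne : T.Nonempty := ⟨_, mem_image_of_mem _ (mem_Ioi.2 (lt_add_one y))⟩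
  have hTbddaux : ∀ m ∈ T, -M ≤ m := by
    rintro m ⟨z, hz, rfl⟩
    rw [mem_Ioi] at hz
    rw [le_div_iff₀ (by linarith : (0:ℝ) < z - y)]
    have := hlip y z hz.le
    nlinarith
  have hTbdd : BddBelow T := ⟨-M, hTbddaux⟩
  set s : ℝ := sInf T with hsdef
  have hsub : ∀ z : ℝ, p y + s * (z - y) ≤ p z := by
    intro z
    rcases lt_trichotomy z y with hzy | hzy | hzy
    · have hls : (p y - p z) / (y - z) ≤ s := by
        refine le_csInf hTne ?_
        rintro m ⟨z2, hz2, rfl⟩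
        rw [mem_Ioi] at hz2
        exact hconv.slope_mono_adjacent (mem_univ z) (mem_univ z2) hzy hz2
      rw [div_le_iff₀ (by linarith : (0:ℝ) < y - z)] at hls
      nlinarith
    · simp [hzy]
    · have hls : s ≤ (p z - p y) / (z - y) :=
        csInf_le hTbdd (mem_image_of_mem _ (mem_Ioi.2 hzy))
      rw [le_div_iff₀ (by linarith : (0:ℝ) < z - y)] at hls
      nlinarith
  have hs0 : s ≤ 0 := by
    have h1 : s ≤ (p (y + 1) - p y) / (y + 1 - y) :=
      csInf_le hTbdd (mem_image_of_mem _ (mem_Ioi.2 (lt_add_one y)))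
    have h2 : p (y + 1) ≤ p y := hanti y (y + 1) (by linarith)
    have : (p (y + 1) - p y) / (y + 1 - y) ≤ 0 := by
      apply div_nonpos_of_nonpos_of_nonneg <;> linarith
    linarith
  have hsM : -M ≤ s := le_csInf hTne hTbddaux
  have hmu : (-s) ∈ Icc (0:ℝ) M := ⟨by linarith, by linarith⟩
  -- strong duality: p y ≤ q (-s)
  have hqbdd : ∀ μ : ℝ, BddBelow ((fun x => f x + μ * (g x - y)) '' X) :=
    fun μ => hXc.bddBelow_image
      ((hf.add (continuous_const.mul (hg.sub continuous_const))).continuousOn)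
  have himne : ∀ μ : ℝ, ((fun x => f x + μ * (g x - y)) '' X).Nonempty :=
    fun μ => ⟨_, mem_image_of_mem _ hx0⟩
  have hstrong : p y ≤ q (-s) := by
    rw [hq]
    refine le_csInf (himne _) ?_
    rintro v ⟨x, hx, rfl⟩
    have h1 := hsub (g x)
    have h2 := hfeas x hx
    show p y ≤ f x + -s * (g x - y)
    nlinarith
  -- weak duality
  have wd : ∀ μ ∈ Icc (0:ℝ) M, ∀ z : ℝ, q μ ≤ p z + μ * (z - y) := by
    rintro μ ⟨hμ0, hμM⟩ z
    rw [hq, hp, ← sub_le_iff_le_add]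
    refine le_csInf (hSne z) ?_
    rintro v ⟨x, hx, ρ, hρ, hgx, rfl⟩
    rw [sub_le_iff_le_add]
    have h1 : sInf ((fun x => f x + μ * (g x - y)) '' X) ≤ f x + μ * (g x - y) :=
      csInf_le (hqbdd μ) (mem_image_of_mem _ hx)
    nlinarith [mul_le_mul_of_nonneg_left (show g x - z ≤ ρ by linarith) hμ0,
      mul_le_mul_of_nonneg_right hμM hρ]
  have hub : ∀ v ∈ q '' Icc (0:ℝ) M, v ≤ p y := by
    rintro v ⟨μ, hμ, rfl⟩
    have := wd μ hμ y
    simpa using this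
  have hsup : p y = sSup (q '' Icc 0 M) := by
    refine le_antisymm ?_ (csSup_le ⟨q 0, mem_image_of_mem _ (left_mem_Icc.2 hM.le)⟩ hub)
    calc p y ≤ q (-s) := hstrong
      _ ≤ sSup (q '' Icc 0 M) := le_csSup ⟨p y, hub⟩ (mem_image_of_mem _ hmu)
  refine ⟨hsup, ?_⟩
  intro μs hμs hmax z
  have hgr : sSup (q '' Icc (0:ℝ) M) = q μs := by
    refine IsGreatest.csSup_eq ⟨mem_image_of_mem q hμs, ?_⟩
    rintro v ⟨μ, hμ, rfl⟩
    exact hmax hμ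
  have hpq : p y = q μs := by rw [hsup, hgr]
  have := wd μs hμs z
  linarith [hpq ▸ this]
end
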